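/- For fixed s ∈ ℂ, the affine cubic surface a₁a₂a₃ + a₁ − a₂ + a₃ + s = 0 in ℂ³ is singular if and only if s = ±2; for s = 2 the unique singular point is (−1, 1, −1) and for s = −2 it is (1, −1, 1), and both singularities are of type A₁. -/

import Mathlib

open MvPolynomial

/-- The family of cubic surfaces `a₁a₂a₃ + a₁ − a₂ + a₃ + s = 0`
(monodromy spaces for the Flaschka–Newell Painlevé II family (0,−,3/2)). -/
noncomputable def cubicPIIFN (s : ℂ) : MvPolynomial (Fin 3) ℂ :=
  X 0 * X 1 * X 2 + X 0 - X 1 + X 2 + C s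

/-- A singular point of the affine surface `F = 0`. -/
def SingPt (F : MvPolynomial (Fin 3) ℂ) (p : Fin 3 → ℂ) : Prop :=
  eval p F = 0 ∧ ∀ i : Fin 3, eval p (pderiv i F) = 0

/-- Type `A₁`: nondegenerate Hessian. -/
def IsA1 (F : MvPolynomial (Fin 3) ℂ) (p : Fin 3 → ℂ) : Prop :=
  (Matrix.of fun i j : Fin 3 => eval p (pderiv i (pderiv j F))).det ≠ 0

/-!
At a singular point the gradient equations give `a₂a₃ = -1`, `a₁a₃ = 1`, `a₁a₂ = -1`.
Combining them forces `a₁ = a₃ = -a₂` and `a₂² = 1`, and then the equation of the surface reads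
`s = 2a₂`; so the surface is singular exactly when `s² = 4`, at the single point
`(-s/2, s/2, -s/2)`. The Hessian has zero diagonal and off-diagonal entries `a₁, a₂, a₃`, so its
determinant is `2a₁a₂a₃`.
-/

theorem singPt_cubicPIIFN_iff_gradient (s : ℂ) (p : Fin 3 → ℂ) :
    SingPt (cubicPIIFN s) p ↔
      p 0 * p 1 * p 2 + p 0 - p 1 + p 2 + s = 0 ∧
        p 1 * p 2 + 1 = 0 ∧ p 0 * p 2 - 1 = 0 ∧ p 0 * p 1 + 1 = 0 := by
  simp [SingPt, Fin.forall_fin_succ, cubicPIIFN, mul_comm]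

theorem singPt_cubicPIIFN_iff (s : ℂ) (p : Fin 3 → ℂ) :
    SingPt (cubicPIIFN s) p ↔ s ^ 2 = 4 ∧ p = ![-(s / 2), s / 2, -(s / 2)] := by
  rw [singPt_cubicPIIFN_iff_gradient]
  constructor
  · rintro ⟨hF, h₀, h₁, h₂⟩
    have hp₀ : p 0 = -p 1 := by linear_combination p 0 * h₀ - p 1 * h₁
    have hp₂ : p 2 = -p 1 := by linear_combination p 2 * h₂ - p 1 * h₁
    have hs : s = 2 * p 1 := by linear_combination hF - p 1 * h₁ - hp₀ - hp₂
    refine ⟨by linear_combination (-4) * h₂ + 4 * p 1 * hp₀ + (s + 2 * p 1) * hs, ?_⟩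
    ext i; fin_cases i <;> simp [hp₀, hp₂, hs]
  · rintro ⟨hs, rfl⟩
    simp only [Matrix.cons_val]
    exact ⟨by linear_combination s / 8 * hs, by linear_combination -hs / 4,
      by linear_combination hs / 4, by linear_combination -hs / 4⟩

theorem det_hessian_cubicPIIFN (s : ℂ) (p : Fin 3 → ℂ) :
    (Matrix.of fun i j : Fin 3 => eval p (pderiv i (pderiv j (cubicPIIFN s)))).det =
      2 * (p 0 * p 1 * p 2) := by
  rw [Matrix.det_fin_three]
  simp [cubicPIIFN, mul_comm, mul_left_comm, mul_assoc, two_mul]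

theorem isA1_cubicPIIFN_iff (s : ℂ) (p : Fin 3 → ℂ) :
    IsA1 (cubicPIIFN s) p ↔ p 0 * p 1 * p 2 ≠ 0 := by
  simp only [IsA1, det_hessian_cubicPIIFN, ne_eq, mul_eq_zero, two_ne_zero, false_or]

/-- For fixed `s ∈ ℂ`, the surface `a₁a₂a₃ + a₁ − a₂ + a₃ + s = 0` is singular iff
`s = ±2`; for `s = 2` the unique singular point is `(−1,1,−1)`, for `s = −2` it is
`(1,−1,1)`, and both are of type `A₁`. -/
theorem stmt_7 (s : ℂ) :
    ((∃ p, SingPt (cubicPIIFN s) p) ↔ (s = 2 ∨ s = -2)) ∧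
    (s = 2 →
      (∀ p, SingPt (cubicPIIFN s) p ↔ p = ![-1, 1, -1]) ∧
      IsA1 (cubicPIIFN s) ![-1, 1, -1]) ∧
    (s = -2 →
      (∀ p, SingPt (cubicPIIFN s) p ↔ p = ![1, -1, 1]) ∧
      IsA1 (cubicPIIFN s) ![1, -1, 1]) := by
  refine ⟨?_, ?_, ?_⟩
  · rw [← sq_eq_sq_iff_eq_or_eq_neg, show (2 : ℂ) ^ 2 = 4 by norm_num]
    simp only [singPt_cubicPIIFN_iff, exists_and_left, exists_eq, and_true]
  · rintro rfl
    norm_num [singPt_cubicPIIFN_iff, isA1_cubicPIIFN_iff, Matrix.cons_val_two, Matrix.tail_cons,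
      Matrix.head_cons]
  · rintro rfl
    norm_num [singPt_cubicPIIFN_iff, isA1_cubicPIIFN_iff, Matrix.cons_val_two, Matrix.tail_cons,
      Matrix.head_cons]
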